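/- arXiv:1809.05745 — 2 statements merged into one kernel-verified Lean document; each statement's English description precedes it below -/
import Mathlib

section
/- Suppose F and O are both nonempty. Then every feasible schedule has makespan at least max{P(F) + Q(O), 3·q_max, 2·p_max + P(F)}. -/
open Finset

noncomputable section

/-- Processing time of a job: `p` on flow-shop jobs, `q` otherwise. -/
def jobTime {J : Type*} [DecidableEq J] (F : Finset J) (p q : J → ℝ) (j : J) : ℝ :=
  if j ∈ F then p j else q j

/-- Feasibility of a schedule given by start times `S j i` of job `j` on machine `i`
(machines `M1, M2, M3` are machines `0, 1, 2`):
all start times are nonnegative, on each machine the open processing intervals of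
distinct jobs are pairwise disjoint, for each job the open processing intervals on the
three machines are pairwise disjoint, and each flow-shop job goes through
`M1`, `M2`, `M3` in this order. -/
def Feasible {J : Type*} [DecidableEq J] (F O : Finset J) (p q : J → ℝ)
    (S : J → Fin 3 → ℝ) : Prop :=
  (∀ j ∈ F ∪ O, ∀ i : Fin 3, 0 ≤ S j i) ∧
  (∀ i : Fin 3, ∀ j ∈ F ∪ O, ∀ k ∈ F ∪ O, j ≠ k →
    S j i + jobTime F p q j ≤ S k i ∨ S k i + jobTime F p q k ≤ S j i) ∧
  (∀ j ∈ F ∪ O, ∀ i i' : Fin 3, i ≠ i' →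
    S j i + jobTime F p q j ≤ S j i' ∨ S j i' + jobTime F p q j ≤ S j i) ∧
  (∀ j ∈ F, S j 0 + p j ≤ S j 1 ∧ S j 1 + p j ≤ S j 2)

/-- Makespan: supremum of all completion times of the jobs of `F ∪ O`. -/
def makespan {J : Type*} [DecidableEq J] (F O : Finset J) (p q : J → ℝ)
    (S : J → Fin 3 → ℝ) : ℝ :=
  sSup {x : ℝ | ∃ j ∈ F ∪ O, ∃ i : Fin 3, x = S j i + jobTime F p q j}


/-!
Each bound is a packing argument: operations with pairwise disjoint interiors inside an
interval have total length at most its length. For `P(F) + Q(O)` pack machine `M1` into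
`[0, makespan]`, for `3 q_max` pack the three operations of a longest open-shop job. For
`2 p_max + P(F)` fix any flow-shop job `m` and split the other flow-shop jobs into `A`, those
finished on `M1` before `m` starts there, `B`, those started on `M3` after `m` finishes there,
and the rest `C`. Packing `A` on `M1` before `m`, `C` with `m` on `M2` between the operations
of `m` on `M1` and `M3`, and `B` on `M3` after `m` accounts for `P(F)` plus two more copies
of `p_m`.
-/

open MeasureTheory

theorem sum_le_sub_of_nonoverlapping {ι : Type*} (T : Finset ι) (s t : ι → ℝ) {a b : ℝ}
    (hab : a ≤ b) (ht : ∀ j ∈ T, 0 ≤ t j) (ha : ∀ j ∈ T, a ≤ s j) (hb : ∀ j ∈ T, s j + t j ≤ b)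
    (hd : (T : Set ι).Pairwise fun j k => s j + t j ≤ s k ∨ s k + t k ≤ s j) :
    ∑ j ∈ T, t j ≤ b - a := by
  have hdisj : (T : Set ι).PairwiseDisjoint fun j => Set.Ioo (s j) (s j + t j) := by
    intro j hj k hk hjk
    rcases hd hj hk hjk with h | h
    · exact Set.Ioo_disjoint_Ioo.2 ((min_le_left _ _).trans (h.trans (le_max_right _ _)))
    · exact Set.Ioo_disjoint_Ioo.2 ((min_le_right _ _).trans (h.trans (le_max_left _ _)))
  have hsub : (⋃ j ∈ T, Set.Ioo (s j) (s j + t j)) ⊆ Set.Icc a b :=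
    Set.iUnion₂_subset fun j hj =>
      Set.Ioo_subset_Icc_self.trans (Set.Icc_subset_Icc (ha j hj) (hb j hj))
  have hvol := measure_mono (μ := volume) hsub
  rw [measure_biUnion_finset hdisj fun _ _ => measurableSet_Ioo, Real.volume_Icc] at hvol
  simp_rw [Real.volume_Ioo, add_sub_cancel_left] at hvol
  rwa [← ENNReal.ofReal_sum_of_nonneg ht, ENNReal.ofReal_le_ofReal_iff (sub_nonneg.2 hab)] at hvol

section Schedule

variable {J : Type*} [DecidableEq J] {F O : Finset J} {p q : J → ℝ} {S : J → Fin 3 → ℝ}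
  {j : J}

theorem jobTime_of_mem_left (hj : j ∈ F) : jobTime F p q j = p j := if_pos hj

theorem jobTime_of_mem_right (hFO : Disjoint F O) (hj : j ∈ O) : jobTime F p q j = q j :=
  if_neg (disjoint_right.1 hFO hj)

theorem sum_jobTime_union (hFO : Disjoint F O) :
    ∑ j ∈ F ∪ O, jobTime F p q j = ∑ j ∈ F, p j + ∑ j ∈ O, q j := by
  rw [sum_union hFO, sum_congr rfl fun _ => jobTime_of_mem_left,
    sum_congr rfl fun _ => jobTime_of_mem_right hFO]

theorem jobTime_nonneg (hp : ∀ j ∈ F, 0 ≤ p j) (hq : ∀ j ∈ O, 0 ≤ q j) (hj : j ∈ F ∪ O) :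
    0 ≤ jobTime F p q j := by
  unfold jobTime
  split_ifs with hjF
  · exact hp j hjF
  · exact hq j ((mem_union.1 hj).resolve_left hjF)

theorem le_makespan (hj : j ∈ F ∪ O) (i : Fin 3) :
    S j i + jobTime F p q j ≤ makespan F O p q S := by
  refine le_csSup ?_ ⟨j, hj, i, rfl⟩
  refine (((F ∪ O) ×ˢ (univ : Finset (Fin 3))).image
    fun x => S x.1 x.2 + jobTime F p q x.1).bddAbove.mono ?_
  rintro _ ⟨k, hk, i', rfl⟩
  simp only [coe_image, coe_product, coe_univ]
  exact Set.mem_image_of_mem _ (Set.mk_mem_prod hk (Set.mem_univ i'))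

namespace Feasible

variable (hS : Feasible F O p q S) (hp : ∀ j ∈ F, 0 ≤ p j) (hq : ∀ j ∈ O, 0 ≤ q j)
include hS hp hq

theorem makespan_nonneg : 0 ≤ makespan F O p q S :=
  Real.sSup_nonneg fun _ ⟨j, hj, i, hx⟩ => hx ▸ add_nonneg (hS.1 j hj i) (jobTime_nonneg hp hq hj)

theorem sum_jobTime_le_makespan : ∑ j ∈ F ∪ O, jobTime F p q j ≤ makespan F O p q S := by
  simpa using sum_le_sub_of_nonoverlapping (F ∪ O) (S · 0) (jobTime F p q)
    (hS.makespan_nonneg hp hq) (fun _ => jobTime_nonneg hp hq) (fun j hj => hS.1 j hj 0)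
    (fun j hj => le_makespan hj 0) fun j hj k hk hjk => hS.2.1 0 j hj k hk hjk

theorem three_mul_jobTime_le_makespan (hj : j ∈ F ∪ O) :
    3 * jobTime F p q j ≤ makespan F O p q S := by
  simpa using sum_le_sub_of_nonoverlapping univ (S j) (fun _ => jobTime F p q j)
    (hS.makespan_nonneg hp hq) (fun _ _ => jobTime_nonneg hp hq hj) (fun i _ => hS.1 j hj i)
    (fun i _ => le_makespan hj i) fun i _ i' _ hii' => hS.2.2.1 j hj i i' hii'

omit hq in
theorem sum_le_sub_of_subset_left {X : Finset J} (hX : X ⊆ F) (i : Fin 3) {a b : ℝ}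
    (hab : a ≤ b) (ha : ∀ j ∈ X, a ≤ S j i) (hb : ∀ j ∈ X, S j i + p j ≤ b) :
    ∑ j ∈ X, p j ≤ b - a :=
  sum_le_sub_of_nonoverlapping X (S · i) p hab (fun j hj => hp j (hX hj)) ha hb
    fun j hj k hk hjk => by
      simpa only [jobTime_of_mem_left (hX hj), jobTime_of_mem_left (hX hk)] using
        hS.2.1 i j (mem_union_left _ (hX hj)) k (mem_union_left _ (hX hk)) hjk

omit hq in
theorem second_operation_within {j m : J} (hj : j ∈ F) (hm : m ∈ F) (hjm : j ≠ m)
    (hj0 : ¬S j 0 + p j ≤ S m 0) (hj2 : ¬S m 2 + p m ≤ S j 2) :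
    S m 0 + p m ≤ S j 1 ∧ S j 1 + p j ≤ S m 2 := by
  have hjFO := mem_union_left O hj
  have hmFO := mem_union_left O hm
  have h0 := (hS.2.1 0 j hjFO m hmFO hjm).resolve_left (by rwa [jobTime_of_mem_left hj])
  have h2 := (hS.2.1 2 m hmFO j hjFO hjm.symm).resolve_left (by rwa [jobTime_of_mem_left hm])
  rw [jobTime_of_mem_left hm] at h0
  rw [jobTime_of_mem_left hj] at h2
  have hj_flow := hS.2.2.2 j hj
  have := hp j hj
  constructor <;> linarith

omit hq in
theorem two_mul_add_sum_le_makespan {m : J} (hm : m ∈ F) :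
    2 * p m + ∑ j ∈ F, p j ≤ makespan F O p q S := by
  have hmFO := mem_union_left O hm
  have hm_flow := hS.2.2.2 m hm
  have hsub : ∀ {X : Finset J}, X ⊆ F.erase m → X ⊆ F := fun h => h.trans (erase_subset m F)
  set A := (F.erase m).filter fun j => S j 0 + p j ≤ S m 0
  set R := (F.erase m).filter fun j => ¬S j 0 + p j ≤ S m 0
  set B := R.filter fun j => S m 2 + p m ≤ S j 2
  set C := R.filter fun j => ¬S m 2 + p m ≤ S j 2
  have hRC : C ⊆ F.erase m := (filter_subset _ R).trans (filter_subset _ _)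
  have hA : ∑ j ∈ A, p j ≤ S m 0 - 0 :=
    hS.sum_le_sub_of_subset_left hp (hsub (filter_subset _ _)) 0 (hS.1 m hmFO 0)
      (fun j hj => hS.1 j (mem_union_left O (hsub (filter_subset _ _) hj)) 0)
      fun j hj => (mem_filter.1 hj).2
  -- `C` meets `m` neither on `M1` nor on `M3`, so on `M2` it runs inside the window
  -- between `m`'s operations on `M1` and `M3`, together with `m` itself
  have hmC : ∑ j ∈ insert m C, p j ≤ S m 2 - (S m 0 + p m) := by
    have hC_window : ∀ j ∈ C, S m 0 + p m ≤ S j 1 ∧ S j 1 + p j ≤ S m 2 := by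
      intro j hj
      obtain ⟨hjR, hjB⟩ := mem_filter.1 hj
      obtain ⟨hjm, hjA⟩ := mem_filter.1 hjR
      exact hS.second_operation_within hp (mem_of_mem_erase hjm) hm (ne_of_mem_erase hjm) hjA hjB
    refine hS.sum_le_sub_of_subset_left hp (insert_subset hm (hsub hRC)) 1
      (by linarith [hp m hm]) ?_ ?_
    · intro j hj
      rcases mem_insert.1 hj with rfl | hj
      exacts [hm_flow.1, (hC_window j hj).1]
    · intro j hj
      rcases mem_insert.1 hj with rfl | hj
      exacts [hm_flow.2, (hC_window j hj).2]
  have hB : ∑ j ∈ B, p j ≤ makespan F O p q S - (S m 2 + p m) := by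
    have hBF : B ⊆ F := hsub ((filter_subset _ R).trans (filter_subset _ _))
    refine hS.sum_le_sub_of_subset_left hp hBF 2 ?_ (fun j hj => (mem_filter.1 hj).2)
      fun j hj => ?_
    · simpa only [jobTime_of_mem_left hm] using le_makespan hmFO 2
    · simpa only [jobTime_of_mem_left (hBF hj)] using le_makespan (mem_union_left O (hBF hj)) 2
  have hsplit : ∑ j ∈ F, p j = p m + (∑ j ∈ A, p j + (∑ j ∈ B, p j + ∑ j ∈ C, p j)) := by
    rw [← add_sum_erase F p hm,
      ← sum_filter_add_sum_filter_not (F.erase m) fun j => S j 0 + p j ≤ S m 0,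
      ← sum_filter_add_sum_filter_not R fun j => S m 2 + p m ≤ S j 2]
  rw [sum_insert fun h => ne_of_mem_erase (hRC h) rfl] at hmC
  linarith

end Feasible

end Schedule

/-- Every feasible schedule has makespan at least
`max {P(F) + Q(O), 3 q_max, 2 p_max + P(F)}`. -/
theorem stmt0 {J : Type*} [DecidableEq J] (F O : Finset J) (p q : J → ℝ)
    (hdisj : Disjoint F O)
    (hp : ∀ j ∈ F, 0 < p j) (hq : ∀ j ∈ O, 0 < q j)
    (hF : F.Nonempty) (hO : O.Nonempty)
    (S : J → Fin 3 → ℝ) (hfeas : Feasible F O p q S) :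
    max (max ((∑ j ∈ F, p j) + ∑ j ∈ O, q j) (3 * O.sup' hO q))
        (2 * F.sup' hF p + ∑ j ∈ F, p j) ≤ makespan F O p q S := by
  have hp' : ∀ j ∈ F, 0 ≤ p j := fun j hj => (hp j hj).le
  have hq' : ∀ j ∈ O, 0 ≤ q j := fun j hj => (hq j hj).le
  obtain ⟨m, hm, hpmax⟩ := F.exists_mem_eq_sup' hF p
  obtain ⟨o, ho, hqmax⟩ := O.exists_mem_eq_sup' hO q
  refine max_le (max_le ?_ ?_) ?_
  · rw [← sum_jobTime_union hdisj]
    exact hfeas.sum_jobTime_le_makespan hp' hq'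
  · rw [hqmax, ← jobTime_of_mem_right (p := p) (q := q) hdisj ho]
    exact hfeas.three_mul_jobTime_le_makespan hp' hq' (mem_union_right F ho)
  · rw [hpmax]
    exact hfeas.two_mul_add_sum_le_makespan hp' hm
end
end

section
/- Let a_1, ..., a_m be positive integers with a_1 + ... + a_m = 2B and let x > B. Consider the instance with m+2 flow-shop jobs of processing times x, x, a_1, ..., a_m and one open-shop job of processing time B + 2x. If there exists a subset S_1 ⊆ {1, ..., m} with Σ_{i∈S_1} a_i = B, then this instance admits a feasible schedule with makespan exactly 3B + 6x = 3·(B+2x). -/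
open Finset

noncomputable section

/-- The Partition-reduction instance: `m + 2` flow-shop jobs of processing times
`x, x, a 1, …, a m` and one open-shop job (the `Sum.inr` job) of processing time
`B + 2x`. -/
def redF (m : ℕ) : Finset ((Fin 2 ⊕ Fin m) ⊕ Unit) := Finset.univ.image Sum.inl

def redO (m : ℕ) : Finset ((Fin 2 ⊕ Fin m) ⊕ Unit) := {Sum.inr ()}

def redp (m : ℕ) (a : Fin m → ℕ) (x : ℝ) : ((Fin 2 ⊕ Fin m) ⊕ Unit) → ℝ :=
  Sum.elim (Sum.elim (fun _ => x) (fun i => (a i : ℝ))) (fun _ => 1)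

def redq (m B : ℕ) (x : ℝ) : ((Fin 2 ⊕ Fin m) ⊕ Unit) → ℝ :=
  fun _ => (B : ℝ) + 2 * x

/-!
Each machine processes five blocks: the first `x`-job, the jobs of `S₁` back to back, the
second `x`-job, the jobs of the complement of `S₁` back to back, and the open job. The open
job occupies `M3`, `M2`, `M1` during the three consecutive periods of length `B + 2x`,
finishing at `3(B + 2x)`; the other blocks fill the remaining time. Both halves of the
partition have total length `B`, and since every `aᵢ ≤ B < x`, a job of a half has left one
machine before its block starts on the next.
-/

section Blocks

variable {J β : Type*} [DecidableEq J] {F O : Finset J} {p q : J → ℝ}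

/-- A schedule in which every job `j` runs at offset `off j` inside the time window of its
block, the window of block `b` on machine `i` being `[start b i, start b i + len b]`. -/
theorem feasible_of_blocks (block : J → β) (start : β → Fin 3 → ℝ) (len : β → ℝ)
    (off : J → ℝ)
    (hoff : ∀ j ∈ F ∪ O, 0 ≤ off j ∧ off j + jobTime F p q j ≤ len (block j))
    (hsame : ∀ j ∈ F ∪ O, ∀ k ∈ F ∪ O, j ≠ k → block j = block k →
      off j + jobTime F p q j ≤ off k ∨ off k + jobTime F p q k ≤ off j)
    (hstart : ∀ b i, 0 ≤ start b i)
    (hmachine : ∀ i b b', b ≠ b' →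
      start b i + len b ≤ start b' i ∨ start b' i + len b' ≤ start b i)
    (hjob : ∀ b i i', i ≠ i' →
      start b i + len b ≤ start b i' ∨ start b i' + len b ≤ start b i)
    (hflow : ∀ j ∈ F, start (block j) 0 + len (block j) ≤ start (block j) 1 ∧
      start (block j) 1 + len (block j) ≤ start (block j) 2) :
    Feasible F O p q (fun j i => start (block j) i + off j) := by
  refine ⟨fun j hj i => add_nonneg (hstart _ _) (hoff j hj).1, ?_, ?_, ?_⟩
  · intro i j hj k hk hjk
    dsimp only
    obtain ⟨hj₀, hj₁⟩ := hoff j hj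
    obtain ⟨hk₀, hk₁⟩ := hoff k hk
    by_cases hb : block j = block k
    · rw [hb]
      rcases hsame j hj k hk hjk hb with h | h
      · left; linarith
      · right; linarith
    · rcases hmachine i _ _ hb with h | h
      · left; linarith
      · right; linarith
  · intro j hj i i' hii'
    obtain ⟨hj₀, hj₁⟩ := hoff j hj
    rcases hjob (block j) i i' hii' with h | h
    · left; linarith
    · right; linarith
  · intro j hj
    have htime : jobTime F p q j = p j := if_pos hj
    obtain ⟨hj₀, hj₁⟩ := hoff j (mem_union_left O hj)
    obtain ⟨h₀₁, h₁₂⟩ := hflow j hj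
    constructor <;> linarith

theorem makespan_eq_of_forall_le {S : J → Fin 3 → ℝ} {C : ℝ}
    (hle : ∀ j ∈ F ∪ O, ∀ i, S j i + jobTime F p q j ≤ C)
    {j₀ : J} (hj₀ : j₀ ∈ F ∪ O) (i₀ : Fin 3) (heq : S j₀ i₀ + jobTime F p q j₀ = C) :
    makespan F O p q S = C :=
  IsGreatest.csSup_eq ⟨⟨j₀, hj₀, i₀, heq.symm⟩, by rintro _ ⟨j, hj, i, rfl⟩; exact hle j hj i⟩

end Blocks

section PrefixSum

variable {ι : Type*} [LinearOrder ι] (T : Finset ι) (w : ι → ℝ)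

def prefixSum (i : ι) : ℝ :=
  ∑ j ∈ T with j < i, w j

variable {T w}

theorem prefixSum_nonneg (hw : ∀ i, 0 ≤ w i) (i : ι) : 0 ≤ prefixSum T w i :=
  sum_nonneg fun j _ => hw j

theorem prefixSum_add_eq {i : ι} (hi : i ∈ T) :
    prefixSum T w i + w i = ∑ j ∈ T with j ≤ i, w j := by
  rw [prefixSum, add_comm, ← sum_insert (by simp)]
  congr 1
  ext j
  simp only [mem_insert, mem_filter]
  constructor
  · rintro (rfl | ⟨hj, hji⟩)
    · exact ⟨hi, le_rfl⟩
    · exact ⟨hj, hji.le⟩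
  · rintro ⟨hj, hji⟩
    exact hji.eq_or_lt.imp id (fun h => ⟨hj, h⟩)

theorem prefixSum_add_le_sum (hw : ∀ i, 0 ≤ w i) {i : ι} (hi : i ∈ T) :
    prefixSum T w i + w i ≤ ∑ j ∈ T, w j := by
  rw [prefixSum_add_eq hi]
  exact sum_le_sum_of_subset_of_nonneg (filter_subset _ _) fun j _ _ => hw j

theorem prefixSum_add_le_of_lt (hw : ∀ i, 0 ≤ w i) {i k : ι} (hi : i ∈ T) (hik : i < k) :
    prefixSum T w i + w i ≤ prefixSum T w k := by
  rw [prefixSum_add_eq hi]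
  exact sum_le_sum_of_subset_of_nonneg (monotone_filter_right _ fun j _ hj => hj.trans_lt hik)
    fun j _ _ => hw j

theorem prefixSum_disjoint (hw : ∀ i, 0 ≤ w i) {i k : ι} (hi : i ∈ T) (hk : k ∈ T) (hik : i ≠ k) :
    prefixSum T w i + w i ≤ prefixSum T w k ∨ prefixSum T w k + w k ≤ prefixSum T w i :=
  hik.lt_or_gt.imp (prefixSum_add_le_of_lt hw hi) (prefixSum_add_le_of_lt hw hk)

end PrefixSum

inductive Block
  | xJob₁ | part₁ | xJob₂ | part₂ | openJob

namespace Block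

def start (B x : ℝ) : Block → Fin 3 → ℝ
  | xJob₁ => ![0, x, B + 2 * x]
  | part₁ => ![x, 2 * x, B + 3 * x]
  | xJob₂ => ![B + x, 2 * B + 4 * x, 2 * B + 5 * x]
  | part₂ => ![B + 2 * x, 2 * B + 5 * x, 2 * B + 6 * x]
  | openJob => ![2 * B + 4 * x, B + 2 * x, 0]

def length (B x : ℝ) : Block → ℝ
  | xJob₁ | xJob₂ => x
  | part₁ | part₂ => B
  | openJob => B + 2 * x

variable {B x : ℝ}

theorem start_nonneg (hB : 0 ≤ B) (hBx : B ≤ x) (b : Block) (i : Fin 3) :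
    0 ≤ start B x b i := by
  cases b <;> fin_cases i <;> simp [start] <;> linarith

theorem end_le (hB : 0 ≤ B) (hBx : B ≤ x) (b : Block) (i : Fin 3) :
    start B x b i + length B x b ≤ 3 * B + 6 * x := by
  cases b <;> fin_cases i <;> simp [start, length] <;> linarith

theorem disjoint_on_machine (hB : 0 ≤ B) (hBx : B ≤ x) (i : Fin 3) {b b' : Block}
    (hbb' : b ≠ b') :
    start B x b i + length B x b ≤ start B x b' i ∨
      start B x b' i + length B x b' ≤ start B x b i := by
  cases b <;> cases b' <;> fin_cases i <;> simp [start, length] at hbb' ⊢ <;>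
    first | (left; linarith) | (right; linarith)

theorem disjoint_across_machines (hB : 0 ≤ B) (hBx : B ≤ x) (b : Block) {i i' : Fin 3}
    (hii' : i ≠ i') :
    start B x b i + length B x b ≤ start B x b i' ∨
      start B x b i' + length B x b ≤ start B x b i := by
  cases b <;> fin_cases i <;> fin_cases i' <;> simp [start, length] at hii' ⊢ <;>
    first | (left; linarith) | (right; linarith)

theorem flow_order (hB : 0 ≤ B) (hBx : B ≤ x) {b : Block} (hb : b ≠ openJob) :
    start B x b 0 + length B x b ≤ start B x b 1 ∧
      start B x b 1 + length B x b ≤ start B x b 2 := by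
  constructor <;> cases b <;> simp [start, length] at hb ⊢ <;> linarith

end Block

section Reduction

variable {m B : ℕ} {a : Fin m → ℕ} {x : ℝ} {S1 : Finset (Fin m)}

@[simp]
theorem jobTime_xJob (k : Fin 2) :
    jobTime (redF m) (redp m a x) (redq m B x) (.inl (.inl k)) = x := by
  simp [jobTime, redF, redp]

@[simp]
theorem jobTime_aJob (r : Fin m) :
    jobTime (redF m) (redp m a x) (redq m B x) (.inl (.inr r)) = a r := by
  simp [jobTime, redF, redp]

@[simp]
theorem jobTime_openJob (u : Unit) :
    jobTime (redF m) (redp m a x) (redq m B x) (.inr u) = B + 2 * x := by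
  simp [jobTime, redF, redq]

def half (S1 : Finset (Fin m)) (r : Fin m) : Finset (Fin m) :=
  if r ∈ S1 then S1 else S1ᶜ

theorem mem_half_self (r : Fin m) : r ∈ half S1 r := by
  unfold half; split_ifs with h <;> simp [h]

theorem sum_half (hsum : ∑ i, a i = 2 * B) (hS1 : ∑ i ∈ S1, a i = B) (r : Fin m) :
    ∑ i ∈ half S1 r, (a i : ℝ) = B := by
  have hcompl : ∑ i ∈ S1ᶜ, a i = B := by
    have := sum_add_sum_compl S1 a
    omega
  unfold half
  split_ifs <;> exact_mod_cast ‹_›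

def redBlock (S1 : Finset (Fin m)) : (Fin 2 ⊕ Fin m) ⊕ Unit → Block
  | .inl (.inl k) => if k = 0 then .xJob₁ else .xJob₂
  | .inl (.inr r) => if r ∈ S1 then .part₁ else .part₂
  | .inr _ => .openJob

def redOffset (a : Fin m → ℕ) (S1 : Finset (Fin m)) : (Fin 2 ⊕ Fin m) ⊕ Unit → ℝ
  | .inl (.inr r) => prefixSum (half S1 r) (fun i => (a i : ℝ)) r
  | _ => 0

theorem redOffset_bounds (hsum : ∑ i, a i = 2 * B) (hS1 : ∑ i ∈ S1, a i = B)
    (j : (Fin 2 ⊕ Fin m) ⊕ Unit) :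
    0 ≤ redOffset a S1 j ∧
      redOffset a S1 j + jobTime (redF m) (redp m a x) (redq m B x) j ≤
        (redBlock S1 j).length B x := by
  have ha₀ (i : Fin m) : (0 : ℝ) ≤ a i := (a i).cast_nonneg
  rcases j with (k | r) | u
  · fin_cases k <;> simp [redOffset, redBlock, Block.length]
  · have hle := prefixSum_add_le_sum ha₀ (mem_half_self (S1 := S1) r)
    rw [sum_half hsum hS1] at hle
    refine ⟨prefixSum_nonneg ha₀ r, ?_⟩
    simp only [redOffset, redBlock, jobTime_aJob]
    split_ifs <;> exact hle
  · simp [redOffset, redBlock, Block.length]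

theorem redOffset_disjoint {j k : (Fin 2 ⊕ Fin m) ⊕ Unit} (hjk : j ≠ k)
    (hb : redBlock S1 j = redBlock S1 k) :
    redOffset a S1 j + jobTime (redF m) (redp m a x) (redq m B x) j ≤ redOffset a S1 k ∨
      redOffset a S1 k + jobTime (redF m) (redp m a x) (redq m B x) k ≤ redOffset a S1 j := by
  rcases j with (i | r) | u <;> rcases k with (i' | r') | u' <;> simp only [redBlock] at hb
  case inl.inl.inl.inl => fin_cases i <;> fin_cases i' <;> simp at hb hjk
  case inl.inr.inl.inr =>
    have hhalf : half S1 r' = half S1 r := by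
      unfold half; split_ifs at hb ⊢ <;> rfl
    have hrr' : r ≠ r' := fun h => hjk (h ▸ rfl)
    simp only [redOffset, jobTime_aJob]
    rw [hhalf]
    exact prefixSum_disjoint (fun i => (a i).cast_nonneg) (mem_half_self r)
      (hhalf ▸ mem_half_self r') hrr'
  case inr.inr => exact absurd rfl hjk
  all_goals split_ifs at hb

theorem redBlock_ne_openJob {j : (Fin 2 ⊕ Fin m) ⊕ Unit} (hj : j ∈ redF m) :
    redBlock S1 j ≠ .openJob := by
  obtain ⟨j, -, rfl⟩ := mem_image.1 hj
  rcases j with k | r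
  · simp only [redBlock]; split_ifs <;> simp
  · simp only [redBlock]; split_ifs <;> simp

end Reduction

theorem stmt12_general (m B : ℕ) (a : Fin m → ℕ)
    (hsum : ∑ i, a i = 2 * B) (x : ℝ) (hx : (B : ℝ) < x)
    (S1 : Finset (Fin m)) (hS1 : ∑ i ∈ S1, a i = B) :
    ∃ S : ((Fin 2 ⊕ Fin m) ⊕ Unit) → Fin 3 → ℝ,
      Feasible (redF m) (redO m) (redp m a x) (redq m B x) S ∧
      makespan (redF m) (redO m) (redp m a x) (redq m B x) S
        = 3 * (B : ℝ) + 6 * x ∧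
      3 * (B : ℝ) + 6 * x = 3 * ((B : ℝ) + 2 * x) := by
  have hB : (0 : ℝ) ≤ B := B.cast_nonneg
  refine ⟨fun j i => (redBlock S1 j).start B x i + redOffset a S1 j, ?_, ?_, by ring⟩
  · exact feasible_of_blocks (redBlock S1) (Block.start B x) (Block.length B x) (redOffset a S1)
      (fun j _ => redOffset_bounds hsum hS1 j) (fun _ _ _ _ => redOffset_disjoint)
      (Block.start_nonneg hB hx.le) (fun i _ _ => Block.disjoint_on_machine hB hx.le i)
      (fun b _ _ => Block.disjoint_across_machines hB hx.le b)
      (fun _ hj => Block.flow_order hB hx.le (redBlock_ne_openJob hj))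
  · refine makespan_eq_of_forall_le (fun j _ i => ?_) (j₀ := .inr ()) (by simp [redO]) 0 ?_
    · linarith [(redOffset_bounds (x := x) hsum hS1 j).2, Block.end_le hB hx.le (redBlock S1 j) i]
    · simp [redBlock, redOffset, Block.start]
      ring

/-- Forward direction of the reduction from Partition: if some subset of the `a i` sums
to `B`, then the reduction instance has a feasible schedule of makespan exactly
`3B + 6x = 3(B + 2x)`. -/
theorem stmt12 (m B : ℕ) (a : Fin m → ℕ) (ha : ∀ i, 0 < a i)
    (hsum : ∑ i, a i = 2 * B) (x : ℝ) (hx : (B : ℝ) < x)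
    (S1 : Finset (Fin m)) (hS1 : ∑ i ∈ S1, a i = B) :
    ∃ S : ((Fin 2 ⊕ Fin m) ⊕ Unit) → Fin 3 → ℝ,
      Feasible (redF m) (redO m) (redp m a x) (redq m B x) S ∧
      makespan (redF m) (redO m) (redp m a x) (redq m B x) S
        = 3 * (B : ℝ) + 6 * x ∧
      3 * (B : ℝ) + 6 * x = 3 * ((B : ℝ) + 2 * x) :=
  stmt12_general m B a hsum x hx S1 hS1
end
end
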